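/- arXiv:2203.14930 — 13 statements merged into one kernel-verified Lean document; each statement's English description precedes it below -/
import Mathlib

section
/- Suppose θ₁, θ₂, θ₃ ∈ ℝ and ω ∈ ℝ satisfy the equations of motion for a relative equilibrium on a rotating meridian, i.e. (ω²/2)·sin(2θ_k) = Σ_{i≠k} sin(θ_k−θ_i)/|sin(θ_k−θ_i)|³ for k = 1,2,3, with sin(θ_k−θ_i) ≠ 0 for all i ≠ k. If ω ≠ 0, then sin(2θ₁) + sin(2θ₂) + sin(2θ₃) = 0. -/
open Real

lemma odd_sin_div_abs_sin_pow (n : ℕ) : Function.Odd fun x : ℝ ↦ sin x / |sin x| ^ n := by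
  intro x
  simp only [Real.sin_neg, abs_neg, neg_div]

lemma Function.Odd.sum_pairwise_three {G H : Type*} [AddCommGroup G] [AddCommGroup H]
    {f : G → H} (hf : Function.Odd f) (a b c : G) :
    (f (a - b) + f (a - c)) + (f (b - a) + f (b - c)) + (f (c - a) + f (c - b)) = 0 := by
  rw [← neg_sub a b, ← neg_sub a c, ← neg_sub b c, hf, hf, hf]
  abel

theorem stmt_0_general (θ₁ θ₂ θ₃ ω : ℝ)
    (eom1 : ω ^ 2 / 2 * sin (2 * θ₁)
      = sin (θ₁ - θ₂) / |sin (θ₁ - θ₂)| ^ 3 + sin (θ₁ - θ₃) / |sin (θ₁ - θ₃)| ^ 3)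
    (eom2 : ω ^ 2 / 2 * sin (2 * θ₂)
      = sin (θ₂ - θ₁) / |sin (θ₂ - θ₁)| ^ 3 + sin (θ₂ - θ₃) / |sin (θ₂ - θ₃)| ^ 3)
    (eom3 : ω ^ 2 / 2 * sin (2 * θ₃)
      = sin (θ₃ - θ₁) / |sin (θ₃ - θ₁)| ^ 3 + sin (θ₃ - θ₂) / |sin (θ₃ - θ₂)| ^ 3)
    (hω : ω ≠ 0) :
    sin (2 * θ₁) + sin (2 * θ₂) + sin (2 * θ₃) = 0 := by
  have hsum : ω ^ 2 / 2 * (sin (2 * θ₁) + sin (2 * θ₂) + sin (2 * θ₃)) = 0 := by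
    rw [mul_add, mul_add, eom1, eom2, eom3]
    exact (odd_sin_div_abs_sin_pow 3).sum_pairwise_three θ₁ θ₂ θ₃
  exact (mul_eq_zero.mp hsum).resolve_left (by positivity)

/-- If θ₁, θ₂, θ₃ and ω satisfy the equations of motion for a relative
equilibrium on a rotating meridian (with all mutual sines nonzero) and ω ≠ 0,
then sin(2θ₁) + sin(2θ₂) + sin(2θ₃) = 0. -/
theorem stmt_0 (θ₁ θ₂ θ₃ ω : ℝ)
    (h12 : sin (θ₁ - θ₂) ≠ 0) (h13 : sin (θ₁ - θ₃) ≠ 0) (h23 : sin (θ₂ - θ₃) ≠ 0)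
    (eom1 : ω ^ 2 / 2 * sin (2 * θ₁)
      = sin (θ₁ - θ₂) / |sin (θ₁ - θ₂)| ^ 3 + sin (θ₁ - θ₃) / |sin (θ₁ - θ₃)| ^ 3)
    (eom2 : ω ^ 2 / 2 * sin (2 * θ₂)
      = sin (θ₂ - θ₁) / |sin (θ₂ - θ₁)| ^ 3 + sin (θ₂ - θ₃) / |sin (θ₂ - θ₃)| ^ 3)
    (eom3 : ω ^ 2 / 2 * sin (2 * θ₃)
      = sin (θ₃ - θ₁) / |sin (θ₃ - θ₁)| ^ 3 + sin (θ₃ - θ₂) / |sin (θ₃ - θ₂)| ^ 3)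
    (hω : ω ≠ 0) :
    sin (2 * θ₁) + sin (2 * θ₂) + sin (2 * θ₃) = 0 :=
  stmt_0_general θ₁ θ₂ θ₃ ω eom1 eom2 eom3 hω
end

section
/- Let a ∈ (0,π) and x ∈ (−π,π). Then 3 + 2(cos(2a) + cos(2(x−a)) + cos(2x)) = 0 if and only if (a,x) is one of the four pairs (2π/3, −2π/3), (π/3, 2π/3), (π/3, −π/3), (2π/3, π/3). -/
/-!
With `u = 2a` and `v = 2x`, the quantity `3 + 2 (cos u + cos (v - u) + cos v)` is
`|1 + e^{iu} + e^{iv}|²`, so it vanishes exactly when three unit vectors sum to zero. Taking real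
and imaginary parts, this forces `cos u = cos v = -1/2` and `sin u = -sin v`; the cosine condition
leaves `a ∈ {π/3, 2π/3}` and `|x| ∈ {π/3, 2π/3}`, and the sine condition selects the four pairs.
-/

open Real

theorem three_add_two_mul_cos_sum_eq_sq_add_sq (u v : ℝ) :
    3 + 2 * (cos u + cos (v - u) + cos v) = (1 + cos u + cos v) ^ 2 + (sin u + sin v) ^ 2 := by
  rw [cos_sub]
  nlinarith [sin_sq_add_cos_sq u, sin_sq_add_cos_sq v]

theorem three_add_two_mul_cos_sum_eq_zero_iff (u v : ℝ) :
    3 + 2 * (cos u + cos (v - u) + cos v) = 0 ↔ 1 + cos u + cos v = 0 ∧ sin u + sin v = 0 := by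
  rw [three_add_two_mul_cos_sum_eq_sq_add_sq,
    add_eq_zero_iff_of_nonneg (sq_nonneg _) (sq_nonneg _), sq_eq_zero_iff, sq_eq_zero_iff]

theorem cos_eq_neg_half_of_one_add_cos_add_cos_eq_zero {u v : ℝ} (hc : 1 + cos u + cos v = 0)
    (hs : sin u + sin v = 0) : cos v = -(1 / 2) := by
  have hcu : cos u = -1 - cos v := by linarith
  have hsu : sin u = -sin v := by linarith
  have := sin_sq_add_cos_sq u
  rw [hcu, hsu] at this
  linear_combination (this - sin_sq_add_cos_sq v) / 2

theorem cos_two_mul_pi_div_three : cos (2 * (π / 3)) = -(1 / 2) := by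
  rw [show 2 * (π / 3) = π - π / 3 by ring, cos_pi_sub, cos_pi_div_three]

theorem cos_two_mul_two_pi_div_three : cos (2 * (2 * π / 3)) = -(1 / 2) := by
  rw [show 2 * (2 * π / 3) = π / 3 + π by ring, cos_add_pi, cos_pi_div_three]

theorem sin_two_mul_pi_div_three : sin (2 * (π / 3)) = √3 / 2 := by
  rw [show 2 * (π / 3) = π - π / 3 by ring, sin_pi_sub, sin_pi_div_three]

theorem sin_two_mul_two_pi_div_three : sin (2 * (2 * π / 3)) = -(√3 / 2) := by
  rw [show 2 * (2 * π / 3) = π / 3 + π by ring, sin_add_pi, sin_pi_div_three]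

theorem eq_pi_div_three_or_eq_two_pi_div_three_of_cos_two_mul_eq_neg_half {t : ℝ}
    (ht : t ∈ Set.Icc 0 π) (h : cos (2 * t) = -(1 / 2)) : t = π / 3 ∨ t = 2 * π / 3 := by
  have hpi := pi_pos
  have hsq : (cos t - 1 / 2) * (cos t + 1 / 2) = 0 := by
    rw [cos_two_mul] at h
    linear_combination h / 2
  rcases mul_eq_zero.mp hsq with h' | h'
  · refine .inl (injOn_cos ht ⟨by positivity, by linarith⟩ ?_)
    rw [cos_pi_div_three]
    linarith
  · refine .inr (injOn_cos ht ⟨by positivity, by linarith⟩ ?_)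
    rw [show 2 * π / 3 = π - π / 3 by ring, cos_pi_sub, cos_pi_div_three]
    linarith

/-- For a ∈ (0,π), x ∈ (−π,π), A² = 3 + 2(cos 2a + cos 2(x−a) + cos 2x) vanishes
exactly at the equilateral shape (2π/3, −2π/3) and the three isosceles shapes
(π/3, 2π/3), (π/3, −π/3), (2π/3, π/3). -/
theorem stmt_3 (a x : ℝ) (ha : a ∈ Set.Ioo 0 π) (hx : x ∈ Set.Ioo (-π) π) :
    3 + 2 * (cos (2 * a) + cos (2 * (x - a)) + cos (2 * x)) = 0 ↔
      (a, x) = (2 * π / 3, -(2 * π / 3)) ∨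
      (a, x) = (π / 3, 2 * π / 3) ∨
      (a, x) = (π / 3, -(π / 3)) ∨
      (a, x) = (2 * π / 3, π / 3) := by
  rw [mul_sub, three_add_two_mul_cos_sum_eq_zero_iff]
  constructor
  · rintro ⟨hc, hs⟩
    have hca := cos_eq_neg_half_of_one_add_cos_add_cos_eq_zero (u := 2 * x) (v := 2 * a)
      (by linarith) (by linarith)
    have hcx := cos_eq_neg_half_of_one_add_cos_add_cos_eq_zero hc hs
    rw [← cos_abs, abs_mul, abs_two] at hcx
    obtain ha' := eq_pi_div_three_or_eq_two_pi_div_three_of_cos_two_mul_eq_neg_half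
      ⟨ha.1.le, ha.2.le⟩ hca
    obtain hx' := eq_pi_div_three_or_eq_two_pi_div_three_of_cos_two_mul_eq_neg_half
      ⟨abs_nonneg x, abs_le.mpr ⟨hx.1.le, hx.2.le⟩⟩ hcx
    have hsqrt3 : √3 ≠ 0 := by positivity
    rcases ha' with rfl | rfl <;> rcases hx' with hx' | hx' <;>
      rcases abs_eq (hx' ▸ abs_nonneg x) |>.mp hx' with rfl | rfl <;>
      simp_all [mul_neg, sin_neg, sin_two_mul_pi_div_three, sin_two_mul_two_pi_div_three]
  · rintro (h | h | h | h) <;> obtain ⟨rfl, rfl⟩ := Prod.mk.inj h <;>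
      norm_num [mul_neg, cos_neg, sin_neg, cos_two_mul_pi_div_three, cos_two_mul_two_pi_div_three,
        sin_two_mul_pi_div_three, sin_two_mul_two_pi_div_three]
end

section
/- Let a, x ∈ ℝ with sin a, sin x, sin(x−a) all nonzero, let A = √(3 + 2(cos 2a + cos 2(x−a) + cos 2x)) ≠ 0, and suppose there exist θ₁ ∈ ℝ and ω ∈ ℝ such that θ₁, θ₂ = θ₁+a, θ₃ = θ₁+x and ω satisfy the equations of motion (ω²/2)·sin(2θ_k) = Σ_{i≠k} sin(θ_k−θ_i)/|sin(θ_k−θ_i)|³ for k = 1,2,3. Then f = (G₁₂−G₂₃)(F₃₁−F₁₂) − (F₁₂−F₂₃)(G₃₁−G₁₂) = 0. -/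
open Real

/-! The coefficients `sin 2(x - a)`, `-sin 2x`, `sin 2a` annihilate `(sin 2θ₁, sin 2θ₂, sin 2θ₃)`
whatever `θ₁` is, so the same combination of the three equations of motion eliminates
both `ω` and `θ₁`; the combination of right-hand sides that remains is `f`. -/

theorem sin_sub_mul_sin_add_sub_eq_zero (t u v : ℝ) :
    sin (v - u) * sin t - sin v * sin (t + u) + sin u * sin (t + v) = 0 := by
  simp only [sin_sub, sin_add]
  ring

theorem stmt_6_general (a x : ℝ)
    (θ₁ ω : ℝ)
    (eom1 : ω ^ 2 / 2 * sin (2 * θ₁)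
      = sin (θ₁ - (θ₁ + a)) / |sin (θ₁ - (θ₁ + a))| ^ 3
        + sin (θ₁ - (θ₁ + x)) / |sin (θ₁ - (θ₁ + x))| ^ 3)
    (eom2 : ω ^ 2 / 2 * sin (2 * (θ₁ + a))
      = sin ((θ₁ + a) - θ₁) / |sin ((θ₁ + a) - θ₁)| ^ 3
        + sin ((θ₁ + a) - (θ₁ + x)) / |sin ((θ₁ + a) - (θ₁ + x))| ^ 3)
    (eom3 : ω ^ 2 / 2 * sin (2 * (θ₁ + x))
      = sin ((θ₁ + x) - θ₁) / |sin ((θ₁ + x) - θ₁)| ^ 3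
        + sin ((θ₁ + x) - (θ₁ + a)) / |sin ((θ₁ + x) - (θ₁ + a))| ^ 3) :
    (sin (2 * a) - sin (2 * (x - a))) * (-(sin x / |sin x| ^ 3) - sin a / |sin a| ^ 3)
      - (sin a / |sin a| ^ 3 - sin (x - a) / |sin (x - a)| ^ 3)
        * (-sin (2 * x) - sin (2 * a)) = 0 := by
  have hcyc := sin_sub_mul_sin_add_sub_eq_zero (2 * θ₁) (2 * a) (2 * x)
  simp only [← mul_sub, ← mul_add] at hcyc
  rw [show θ₁ - (θ₁ + a) = -a by ring, show θ₁ - (θ₁ + x) = -x by ring] at eom1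
  rw [show θ₁ + a - θ₁ = a by ring, show θ₁ + a - (θ₁ + x) = -(x - a) by ring] at eom2
  rw [show θ₁ + x - θ₁ = x by ring, show θ₁ + x - (θ₁ + a) = x - a by ring] at eom3
  simp only [sin_neg, abs_neg] at eom1 eom2 eom3
  linear_combination sin (2 * (x - a)) * eom1 - sin (2 * x) * eom2 + sin (2 * a) * eom3
    - ω ^ 2 / 2 * hcyc

/-- If a configuration θ₁, θ₂ = θ₁+a, θ₃ = θ₁+x with some ω satisfies the equations of
motion and A ≠ 0, then the shape (a,x) satisfies the rigid-rotator condition f = 0. -/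
theorem stmt_6 (a x : ℝ)
    (hsa : sin a ≠ 0) (hsx : sin x ≠ 0) (hsxa : sin (x - a) ≠ 0)
    (hA : Real.sqrt (3 + 2 * (cos (2 * a) + cos (2 * (x - a)) + cos (2 * x))) ≠ 0)
    (θ₁ ω : ℝ)
    (eom1 : ω ^ 2 / 2 * sin (2 * θ₁)
      = sin (θ₁ - (θ₁ + a)) / |sin (θ₁ - (θ₁ + a))| ^ 3
        + sin (θ₁ - (θ₁ + x)) / |sin (θ₁ - (θ₁ + x))| ^ 3)
    (eom2 : ω ^ 2 / 2 * sin (2 * (θ₁ + a))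
      = sin ((θ₁ + a) - θ₁) / |sin ((θ₁ + a) - θ₁)| ^ 3
        + sin ((θ₁ + a) - (θ₁ + x)) / |sin ((θ₁ + a) - (θ₁ + x))| ^ 3)
    (eom3 : ω ^ 2 / 2 * sin (2 * (θ₁ + x))
      = sin ((θ₁ + x) - θ₁) / |sin ((θ₁ + x) - θ₁)| ^ 3
        + sin ((θ₁ + x) - (θ₁ + a)) / |sin ((θ₁ + x) - (θ₁ + a))| ^ 3) :
    (sin (2 * a) - sin (2 * (x - a))) * (-(sin x / |sin x| ^ 3) - sin a / |sin a| ^ 3)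
      - (sin a / |sin a| ^ 3 - sin (x - a) / |sin (x - a)| ^ 3)
        * (-sin (2 * x) - sin (2 * a)) = 0 :=
  stmt_6_general a x θ₁ ω eom1 eom2 eom3
end

section
/- Let a, x ∈ ℝ with sin a, sin x, sin(x−a) all nonzero, let A = √(3 + 2(cos 2a + cos 2(x−a) + cos 2x)) ≠ 0, define G₁₂ = sin(2a), G₂₃ = sin(2(x−a)), G₃₁ = −sin(2x), F₁₂ = sin a/|sin a|³, F₂₃ = sin(x−a)/|sin(x−a)|³, F₃₁ = −sin x/|sin x|³, and assume (G₁₂−G₂₃, G₃₁−G₁₂) ≠ (0,0) and f = (G₁₂−G₂₃)(F₃₁−F₁₂) − (F₁₂−F₂₃)(G₃₁−G₁₂) = 0. Then there exist θ₁ ∈ ℝ and ω ∈ ℝ such that θ₁, θ₂ = θ₁+a, θ₃ = θ₁+x and ω satisfy the equations of motion (ω²/2)·sin(2θ_k) = Σ_{i≠k} sin(θ_k−θ_i)/|sin(θ_k−θ_i)|³ for k = 1,2,3. -/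
/-!
The right-hand sides of the three equations of motion sum to zero, and the condition `f = 0`
says that the vector they form is a multiple `μ (G₃₁ - G₁₂, G₁₂ - G₂₃, G₂₃ - G₃₁)`. That
vector is `t ↦ μ Im (w e^{it})` sampled at `t = 0, 2a, 2x`, with
`w = conj (1 + e^{2ia} + e^{2ix})`; writing `μ w = r e^{iφ}` with `r ≥ 0` makes it
`r sin (φ + t)`, so `2θ₁ = φ` and `ω² = 2r` solve the equations.
-/

open Real

lemma exists_mul_eq_of_mul_sub_mul_eq_zero {K : Type*} [Field K] {p q u v : K}
    (hpq : (p, q) ≠ (0, 0)) (h : p * v - u * q = 0) : ∃ μ, μ * p = u ∧ μ * q = v := by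
  by_cases hq : q = 0
  · have hp : p ≠ 0 := fun hp ↦ hpq (by rw [hp, hq])
    have hv : v = 0 := (mul_eq_zero.1 (by simpa [hq] using h)).resolve_left hp
    exact ⟨u / p, div_mul_cancel₀ u hp, by rw [hq, hv, mul_zero]⟩
  · refine ⟨v / q, ?_, div_mul_cancel₀ v hq⟩
    field_simp
    linear_combination h

lemma exists_nonneg_mul_sin_add_eq (p q : ℝ) :
    ∃ r φ : ℝ, 0 ≤ r ∧ ∀ t, r * sin (φ + t) = p * cos t + q * sin t := by
  refine ⟨‖(⟨q, p⟩ : ℂ)‖, Complex.arg ⟨q, p⟩, norm_nonneg _, fun t ↦ ?_⟩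
  rw [sin_add, mul_add, ← mul_assoc, ← mul_assoc, Complex.norm_mul_sin_arg,
    Complex.norm_mul_cos_arg]

lemma sin_neg_div_abs_sin_neg_pow (t : ℝ) (n : ℕ) :
    sin (-t) / |sin (-t)| ^ n = -(sin t / |sin t| ^ n) := by
  rw [sin_neg, abs_neg, neg_div]

theorem stmt_7_general (a x : ℝ)
    (hne : (sin (2 * a) - sin (2 * (x - a)), -sin (2 * x) - sin (2 * a)) ≠ (0, 0))
    (hf : (sin (2 * a) - sin (2 * (x - a))) * (-(sin x / |sin x| ^ 3) - sin a / |sin a| ^ 3)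
      - (sin a / |sin a| ^ 3 - sin (x - a) / |sin (x - a)| ^ 3)
        * (-sin (2 * x) - sin (2 * a)) = 0) :
    ∃ θ₁ ω : ℝ,
      (ω ^ 2 / 2 * sin (2 * θ₁)
        = sin (θ₁ - (θ₁ + a)) / |sin (θ₁ - (θ₁ + a))| ^ 3
          + sin (θ₁ - (θ₁ + x)) / |sin (θ₁ - (θ₁ + x))| ^ 3) ∧
      (ω ^ 2 / 2 * sin (2 * (θ₁ + a))
        = sin ((θ₁ + a) - θ₁) / |sin ((θ₁ + a) - θ₁)| ^ 3
          + sin ((θ₁ + a) - (θ₁ + x)) / |sin ((θ₁ + a) - (θ₁ + x))| ^ 3) ∧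
      (ω ^ 2 / 2 * sin (2 * (θ₁ + x))
        = sin ((θ₁ + x) - θ₁) / |sin ((θ₁ + x) - θ₁)| ^ 3
          + sin ((θ₁ + x) - (θ₁ + a)) / |sin ((θ₁ + x) - (θ₁ + a))| ^ 3) := by
  obtain ⟨μ, hP, hQ⟩ := exists_mul_eq_of_mul_sub_mul_eq_zero hne hf
  obtain ⟨r, φ, hr, hφ⟩ := exists_nonneg_mul_sin_add_eq
    (μ * (-sin (2 * x) - sin (2 * a))) (μ * (1 + cos (2 * a) + cos (2 * x)))
  have hω : √(2 * r) ^ 2 / 2 = r := by rw [sq_sqrt (by positivity)]; ring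
  have h2xa : sin (2 * (x - a)) = sin (2 * x) * cos (2 * a) - cos (2 * x) * sin (2 * a) := by
    rw [mul_sub, sin_sub]
  refine ⟨φ / 2, √(2 * r), ?_, ?_, ?_⟩ <;>
    simp only [hω, sub_add_cancel_left, add_sub_cancel_left, add_sub_add_left_eq_sub,
      ← neg_sub x a, sin_neg_div_abs_sin_neg_pow, mul_add, mul_div_cancel₀ φ two_ne_zero]
  · rw [← add_zero φ, hφ, cos_zero, sin_zero, hQ]
    ring
  · rw [hφ]
    linear_combination hP + μ * h2xa
  · rw [hφ]
    linear_combination -hP - hQ - μ * h2xa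

/-- If a shape (a,x) with A ≠ 0 satisfies the rigid-rotator condition f = 0 (and not both
G₁₂−G₂₃ and G₃₁−G₁₂ vanish), then there is a corresponding relative equilibrium: some θ₁
and ω for which the configuration θ₁, θ₁+a, θ₁+x satisfies the equations of motion. -/
theorem stmt_7 (a x : ℝ)
    (hsa : sin a ≠ 0) (hsx : sin x ≠ 0) (hsxa : sin (x - a) ≠ 0)
    (hA : Real.sqrt (3 + 2 * (cos (2 * a) + cos (2 * (x - a)) + cos (2 * x))) ≠ 0)
    (hne : (sin (2 * a) - sin (2 * (x - a)), -sin (2 * x) - sin (2 * a)) ≠ (0, 0))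
    (hf : (sin (2 * a) - sin (2 * (x - a))) * (-(sin x / |sin x| ^ 3) - sin a / |sin a| ^ 3)
      - (sin a / |sin a| ^ 3 - sin (x - a) / |sin (x - a)| ^ 3)
        * (-sin (2 * x) - sin (2 * a)) = 0) :
    ∃ θ₁ ω : ℝ,
      (ω ^ 2 / 2 * sin (2 * θ₁)
        = sin (θ₁ - (θ₁ + a)) / |sin (θ₁ - (θ₁ + a))| ^ 3
          + sin (θ₁ - (θ₁ + x)) / |sin (θ₁ - (θ₁ + x))| ^ 3) ∧
      (ω ^ 2 / 2 * sin (2 * (θ₁ + a))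
        = sin ((θ₁ + a) - θ₁) / |sin ((θ₁ + a) - θ₁)| ^ 3
          + sin ((θ₁ + a) - (θ₁ + x)) / |sin ((θ₁ + a) - (θ₁ + x))| ^ 3) ∧
      (ω ^ 2 / 2 * sin (2 * (θ₁ + x))
        = sin ((θ₁ + x) - θ₁) / |sin ((θ₁ + x) - θ₁)| ^ 3
          + sin ((θ₁ + x) - (θ₁ + a)) / |sin ((θ₁ + x) - (θ₁ + a))| ^ 3) :=
  stmt_7_general a x hne hf
end

section
/- For all real numbers a and x, 2 cos x · sin²(a−x) · sin(2a−x) · (sin²a + sin²x) − sin²x · (sin²(a−x) + sin²a) · (sin 2a + sin 2x) = (sin(2x−a)/4) · ( −cos a · cos(4(x−a/2)) + 2(2 cos 2a + sin²2a) · cos(2(x−a/2)) − cos a · (cos 4a − 5 cos 2a + 7) ). That is, in the scalene region the rigid-rotator function g factors as g = (sin 2y)·h/4 with y = x − a/2. -/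
open Real

/-- Factorization of the rigid-rotator function: g = (sin 2y)·h/4 with y = x − a/2. -/
theorem stmt_9 (a x : ℝ) :
    2 * cos x * sin (a - x) ^ 2 * sin (2 * a - x) * (sin a ^ 2 + sin x ^ 2)
      - sin x ^ 2 * (sin (a - x) ^ 2 + sin a ^ 2) * (sin (2 * a) + sin (2 * x))
    = sin (2 * x - a) / 4 *
      (-cos a * cos (4 * (x - a / 2))
        + 2 * (2 * cos (2 * a) + sin (2 * a) ^ 2) * cos (2 * (x - a / 2))
        - cos a * (cos (4 * a) - 5 * cos (2 * a) + 7)) := by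
  rw [show 4 * (x - a / 2) = 2 * (2 * x - a) by ring, show 2 * (x - a / 2) = 2 * x - a by ring,
    show 4 * a = 2 * (2 * a) by ring]
  simp only [sin_sub, cos_sub, sin_two_mul, cos_two_mul]
  -- Both sides are now polynomials in `sin a, cos a, sin x, cos x`, equal modulo the ideal
  -- generated by the two Pythagorean relations; `grind`'s commutative-ring solver finds the membership.
  grind [sin_sq_add_cos_sq]
end

section
/- Let a ∈ (π/2, π) with cos²(2a) − 4cos(2a) − 4 ≥ 0. Then |cos a + (sin²a/cos a)·(cos 2a − √(cos²(2a) − 4cos(2a) − 4))| > 1; consequently, for every y ∈ ℝ with h(y,a) = 0 one has cos(2y) = cos a + (sin²a/cos a)·(cos 2a + √(cos²(2a) − 4cos(2a) − 4)), i.e. the admissible root of the quadratic h = 0 in cos(2y) is unique. -/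
open Real

/-- For a ∈ (π/2,π) with cos²2a − 4 cos 2a − 4 ≥ 0, the root of the quadratic h = 0 in
cos 2y with the minus sign has absolute value greater than 1; hence every zero of h
selects the plus-sign root, so the admissible root is unique. -/
theorem stmt_10 (a : ℝ) (ha : a ∈ Set.Ioo (π / 2) π)
    (hdisc : cos (2 * a) ^ 2 - 4 * cos (2 * a) - 4 ≥ 0) :
    |cos a + sin a ^ 2 / cos a *
        (cos (2 * a) - Real.sqrt (cos (2 * a) ^ 2 - 4 * cos (2 * a) - 4))| > 1 ∧
    ∀ y : ℝ,
      -cos a * cos (4 * y) + 2 * (2 * cos (2 * a) + sin (2 * a) ^ 2) * cos (2 * y)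
          - cos a * (cos (4 * a) - 5 * cos (2 * a) + 7) = 0 →
      cos (2 * y) = cos a + sin a ^ 2 / cos a *
        (cos (2 * a) + Real.sqrt (cos (2 * a) ^ 2 - 4 * cos (2 * a) - 4)) := by
  obtain ⟨ha1, ha2⟩ := ha
  have hpi := Real.pi_pos
  have hc : cos a < 0 := cos_neg_of_pi_div_two_lt_of_lt ha1 (by linarith)
  have hc0 : cos a ≠ 0 := ne_of_lt hc
  have hs : sin a > 0 := sin_pos_of_pos_of_lt_pi (by linarith) ha2
  have hsq : sin a ^ 2 = 1 - cos a ^ 2 := sin_sq a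
  have hc1 : -1 < cos a := by nlinarith
  set c := cos a with hcdef
  have hC : cos (2 * a) = 2 * c ^ 2 - 1 := cos_two_mul a
  have h4a : cos (4 * a) = 2 * cos (2 * a) ^ 2 - 1 := by
    rw [show (4 : ℝ) * a = 2 * (2 * a) by ring]; exact cos_two_mul (2 * a)
  have hS2 : sin (2 * a) ^ 2 = 4 * c ^ 2 * (1 - c ^ 2) := by
    rw [sin_two_mul]; nlinarith
  set t := Real.sqrt (cos (2 * a) ^ 2 - 4 * cos (2 * a) - 4) with htdef
  have ht0 : 0 ≤ t := Real.sqrt_nonneg _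
  have ht2 : t ^ 2 = 4 * c ^ 4 - 12 * c ^ 2 + 1 := by
    rw [htdef, Real.sq_sqrt hdisc, hC]; ring
  have hccond : 4 * c ^ 4 - 12 * c ^ 2 + 1 ≥ 0 := by nlinarith
  -- the minus-sign root is > 1
  have key : 1 < c + sin a ^ 2 / c * (cos (2 * a) - t) := by
    have h1 : c * (c + sin a ^ 2 / c * (cos (2 * a) - t)) =
        c ^ 2 + (1 - c ^ 2) * ((2 * c ^ 2 - 1) - t) := by
      rw [hsq, hC]; field_simp
    have h2 : c * (c + sin a ^ 2 / c * (cos (2 * a) - t)) < c * 1 := by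
      rw [h1]; nlinarith
    exact (mul_lt_mul_left_of_neg hc).mp h2
  constructor
  · calc (1 : ℝ) < c + sin a ^ 2 / c * (cos (2 * a) - t) := key
    _ ≤ |c + sin a ^ 2 / c * (cos (2 * a) - t)| := le_abs_self _
  · intro y hy
    set u := cos (2 * y) with hudef
    have hu1 : u ≤ 1 := cos_le_one _
    have h4y : cos (4 * y) = 2 * u ^ 2 - 1 := by
      rw [show (4 : ℝ) * y = 2 * (2 * y) by ring]; exact cos_two_mul (2 * y)
    rw [h4y, h4a, hC, hS2] at hy
    -- c * H = -2 (cu - c² - (1-c²)(2c²-1))² + 2(1-c²)² t²  where H = 0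
    have hfac : (c * u - (c ^ 2 + (1 - c ^ 2) * ((2 * c ^ 2 - 1) - t))) *
        (c * u - (c ^ 2 + (1 - c ^ 2) * ((2 * c ^ 2 - 1) + t))) = 0 := by
      linear_combination (-(c / 2)) * hy + (-(1 - c ^ 2) ^ 2) * ht2
    rcases mul_eq_zero.mp hfac with h | h
    · exfalso
      have hue : u = c + sin a ^ 2 / c * (cos (2 * a) - t) := by
        rw [hsq, hC]
        field_simp
        linear_combination h
      rw [hue] at hu1; linarith
    · rw [hsq, hC]
      field_simp
      linear_combination h
end

section
/- Let θ ∈ (0, 2π/3) with θ ≠ π/2. Set θ₁ = −θ, θ₂ = θ, θ₃ = 0 and ω² = 2( 1/|sin 2θ|³ + 1/(sin²θ · sin 2θ) ). Then ω² > 0 and the equations of motion (ω²/2)·sin(2θ_k) = Σ_{i≠k} sin(θ_k−θ_i)/|sin(θ_k−θ_i)|³, k = 1,2,3, are satisfied. Hence every isosceles shape with two equal arc angles θ ∈ (0,2π/3)\{π/2} and mid mass at the pole forms a relative equilibrium. -/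
open Real

/-- Every isosceles shape with two equal arc angles θ ∈ (0,2π/3), θ ≠ π/2, and mid mass
at the pole forms a relative equilibrium: with θ₁ = −θ, θ₂ = θ, θ₃ = 0 and
ω² = 2(1/|sin 2θ|³ + 1/(sin²θ·sin 2θ)), we have ω² > 0 and the equations of motion hold. -/
theorem stmt_13 (θ : ℝ) (hθ : θ ∈ Set.Ioo 0 (2 * π / 3)) (hθ' : θ ≠ π / 2)
    (θ₁ θ₂ θ₃ ω2 : ℝ) (h1 : θ₁ = -θ) (h2 : θ₂ = θ) (h3 : θ₃ = 0)
    (hω2 : ω2 = 2 * (1 / |sin (2 * θ)| ^ 3 + 1 / (sin θ ^ 2 * sin (2 * θ)))) :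
    0 < ω2 ∧
    (ω2 / 2 * sin (2 * θ₁)
      = sin (θ₁ - θ₂) / |sin (θ₁ - θ₂)| ^ 3 + sin (θ₁ - θ₃) / |sin (θ₁ - θ₃)| ^ 3) ∧
    (ω2 / 2 * sin (2 * θ₂)
      = sin (θ₂ - θ₁) / |sin (θ₂ - θ₁)| ^ 3 + sin (θ₂ - θ₃) / |sin (θ₂ - θ₃)| ^ 3) ∧
    (ω2 / 2 * sin (2 * θ₃)
      = sin (θ₃ - θ₁) / |sin (θ₃ - θ₁)| ^ 3 + sin (θ₃ - θ₂) / |sin (θ₃ - θ₂)| ^ 3) := by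
  obtain ⟨hθ0, hθ2⟩ := hθ
  have hπ : 0 < π := pi_pos
  have hθπ : θ < π := by linarith
  have hs : 0 < sin θ := Real.sin_pos_of_pos_of_lt_pi hθ0 hθπ
  have hcne : cos θ ≠ 0 := by
    intro h
    exact hθ' (Real.injOn_cos ⟨le_of_lt hθ0, le_of_lt hθπ⟩ ⟨by linarith, by linarith⟩
      (by rw [h, Real.cos_pi_div_two]))
  have h2s : sin (2 * θ) = 2 * sin θ * cos θ := Real.sin_two_mul θ
  have hxne : sin (2 * θ) ≠ 0 := by
    rw [h2s]
    exact mul_ne_zero (mul_ne_zero two_ne_zero (ne_of_gt hs)) hcne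
  have hclb : -(1 / 2) < cos θ := by
    have ha : cos (2 * π / 3) < cos θ :=
      Real.cos_lt_cos_of_nonneg_of_le_pi (le_of_lt hθ0) (by linarith) hθ2
    have hb : cos (2 * π / 3) = -(1 / 2) := by
      have h23 : (2 : ℝ) * π / 3 = π - π / 3 := by ring
      rw [h23, Real.cos_pi_sub, Real.cos_pi_div_three]
    linarith [hb ▸ ha]
  have hA : 0 < |sin (2 * θ)| := abs_pos.mpr hxne
  have hpos : 0 < ω2 := by
    rw [hω2]
    rcases lt_or_gt_of_ne hcne with hc | hc
    · -- cos θ < 0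
      have hxneg : sin (2 * θ) < 0 := by rw [h2s]; nlinarith
      have habs : |sin (2 * θ)| = -sin (2 * θ) := abs_of_neg hxneg
      have hsq : sin (2 * θ) ^ 2 < sin θ ^ 2 := by
        rw [h2s]
        nlinarith [mul_pos (show (0:ℝ) < cos θ + 1/2 by linarith)
          (show (0:ℝ) < -cos θ by linarith), mul_pos hs hs]
      have key : 0 < 1 / |sin (2 * θ)| ^ 3 + 1 / (sin θ ^ 2 * sin (2 * θ)) := by
        rw [habs]
        have ha' : 0 < -sin (2 * θ) := by linarith
        have h1' : 1 / (sin θ ^ 2 * sin (2 * θ))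
            = -(1 / (sin θ ^ 2 * (-sin (2 * θ)))) := by
          field_simp
        rw [h1']
        have h2' : 1 / (sin θ ^ 2 * (-sin (2 * θ))) < 1 / (-sin (2 * θ)) ^ 3 := by
          apply one_div_lt_one_div_of_lt
          · positivity
          · nlinarith
        linarith
      linarith
    · -- cos θ > 0
      have hxpos : 0 < sin (2 * θ) := by rw [h2s]; positivity
      have : 0 < 1 / |sin (2 * θ)| ^ 3 + 1 / (sin θ ^ 2 * sin (2 * θ)) := by positivity
      linarith
  refine ⟨hpos, ?_, ?_, ?_⟩
  · rw [h1, h2, h3, hω2]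
    have e1 : (2 : ℝ) * -θ = -(2 * θ) := by ring
    have e2 : -θ - θ = -(2 * θ) := by ring
    have e3 : -θ - 0 = -θ := by ring
    rw [e1, e2, e3, Real.sin_neg, Real.sin_neg θ, abs_neg, abs_neg, abs_of_pos hs]
    field_simp
    ring
  · rw [h1, h2, h3, hω2]
    have e2 : θ - -θ = 2 * θ := by ring
    have e3 : θ - 0 = θ := by ring
    rw [e2, e3, abs_of_pos hs]
    field_simp
  · rw [h1, h2, h3]
    have e2 : (0 : ℝ) - -θ = θ := by ring
    have e3 : (0 : ℝ) - θ = -θ := by ring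
    rw [e2, e3, Real.sin_neg, abs_neg, mul_zero, Real.sin_zero, mul_zero]
    ring
end

section
/- Let θ ∈ (2π/3, π). Set θ₁ = π/2 − θ, θ₂ = π/2 + θ, θ₃ = π/2 and ω² = −2( 1/|sin 2θ|³ + 1/(sin²θ · sin 2θ) ). Then ω² > 0 and the equations of motion (ω²/2)·sin(2θ_k) = Σ_{i≠k} sin(θ_k−θ_i)/|sin(θ_k−θ_i)|³, k = 1,2,3, are satisfied. Hence every isosceles shape with two equal arc angles θ ∈ (2π/3, π) and mid mass on the equator forms a relative equilibrium. -/
open Real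

/-- Every isosceles shape with two equal arc angles θ ∈ (2π/3,π) and mid mass on the
equator forms a relative equilibrium: with θ₁ = π/2 − θ, θ₂ = π/2 + θ, θ₃ = π/2 and
ω² = −2(1/|sin 2θ|³ + 1/(sin²θ·sin 2θ)), we have ω² > 0 and the equations of motion hold. -/
theorem stmt_14 (θ : ℝ) (hθ : θ ∈ Set.Ioo (2 * π / 3) π)
    (θ₁ θ₂ θ₃ ω2 : ℝ) (h1 : θ₁ = π / 2 - θ) (h2 : θ₂ = π / 2 + θ) (h3 : θ₃ = π / 2)
    (hω2 : ω2 = -(2 * (1 / |sin (2 * θ)| ^ 3 + 1 / (sin θ ^ 2 * sin (2 * θ))))) :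
    0 < ω2 ∧
    (ω2 / 2 * sin (2 * θ₁)
      = sin (θ₁ - θ₂) / |sin (θ₁ - θ₂)| ^ 3 + sin (θ₁ - θ₃) / |sin (θ₁ - θ₃)| ^ 3) ∧
    (ω2 / 2 * sin (2 * θ₂)
      = sin (θ₂ - θ₁) / |sin (θ₂ - θ₁)| ^ 3 + sin (θ₂ - θ₃) / |sin (θ₂ - θ₃)| ^ 3) ∧
    (ω2 / 2 * sin (2 * θ₃)
      = sin (θ₃ - θ₁) / |sin (θ₃ - θ₁)| ^ 3 + sin (θ₃ - θ₂) / |sin (θ₃ - θ₂)| ^ 3) := by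
  obtain ⟨ha, hb⟩ := hθ
  have hπ := pi_pos
  have hθpos : 0 < θ := by nlinarith
  have hs : 0 < sin θ := sin_pos_of_pos_of_lt_pi hθpos hb
  have hc : cos θ < -(1/2) := by
    have h23 : cos (2 * π / 3) = -(1/2) := by
      have h : 2 * π / 3 = π - π / 3 := by ring
      rw [h, Real.cos_pi_sub, Real.cos_pi_div_three]
    calc cos θ < cos (2 * π / 3) :=
          Real.strictAntiOn_cos ⟨by positivity, by linarith⟩ ⟨by positivity, hb.le⟩ ha
      _ = -(1/2) := h23
  have h2θ : sin (2 * θ) < 0 := by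
    rw [sin_two_mul]; nlinarith
  have habs2 : |sin (2 * θ)| = -sin (2 * θ) := abs_of_neg h2θ
  have habs : |sin θ| = sin θ := abs_of_pos hs
  have hkey : sin θ ^ 2 < sin (2 * θ) ^ 2 := by
    rw [sin_two_mul]
    have hc2 : 1 < 4 * cos θ ^ 2 := by nlinarith
    nlinarith [mul_pos (mul_pos hs hs) (by linarith : (0:ℝ) < 4 * cos θ ^ 2 - 1)]
  subst h1 h2 h3
  have e1 : 2 * (π / 2 - θ) = π - 2 * θ := by ring
  have e2 : π / 2 - θ - (π / 2 + θ) = -(2 * θ) := by ring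
  have e3 : π / 2 - θ - π / 2 = -θ := by ring
  have e4 : 2 * (π / 2 + θ) = 2 * θ + π := by ring
  have e5 : π / 2 + θ - (π / 2 - θ) = 2 * θ := by ring
  have e6 : π / 2 + θ - π / 2 = θ := by ring
  have e7 : (2 : ℝ) * (π / 2) = π := by ring
  have e8 : π / 2 - (π / 2 - θ) = θ := by ring
  have e9 : π / 2 - (π / 2 + θ) = -θ := by ring
  rw [e1, e2, e3, e4, e5, e6, e7, e8, e9, Real.sin_pi_sub, Real.sin_add_pi, Real.sin_pi]
  simp only [Real.sin_neg, abs_neg]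
  rw [hω2, habs, habs2]
  have hs2ne : sin (2 * θ) ≠ 0 := ne_of_lt h2θ
  have hsne : sin θ ≠ 0 := ne_of_gt hs
  refine ⟨?_, by field_simp; ring, by field_simp, by ring⟩
  have hA : (0:ℝ) < -sin (2 * θ) := neg_pos.2 h2θ
  have hval : -(2 * (1 / (-sin (2 * θ)) ^ 3 + 1 / (sin θ ^ 2 * sin (2 * θ))))
      = 2 * (sin (2 * θ) ^ 2 - sin θ ^ 2) / (sin θ ^ 2 * (-sin (2 * θ)) ^ 3) := by
    field_simp
    ring
  rw [hval]
  apply div_pos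
  · nlinarith
  · exact mul_pos (pow_pos hs 2) (pow_pos hA 3)
end

section
/- For every θ₃ ∈ ℝ, the equilateral configuration θ₁ = θ₃ − 2π/3, θ₂ = θ₃ + 2π/3, θ₃ with ω = 0 satisfies the equations of motion; in particular, for each k = 1,2,3, Σ_{i≠k} sin(θ_k−θ_i)/|sin(θ_k−θ_i)|³ = 0. Hence the equilateral shape with all arc angles 2π/3 is a fixed point and the individual angles θ_k are arbitrary. -/
open Real

/-!
The force `sin x / |sin x| ^ 3` exerted across an arc `x` is odd and `2π`-periodic in `x`.
For the equilateral configuration the two arcs seen from each mass add up to `-2π`, `2π`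
or `0`, so the two forces on each mass cancel, and with `ω = 0` the equations of motion
reduce to these cancellations.
-/

lemma sin_div_abs_pow_add_eq_zero_of_sin_eq_neg {x y : ℝ} (k : ℕ) (h : sin y = -sin x) :
    sin x / |sin x| ^ k + sin y / |sin y| ^ k = 0 := by
  rw [h, abs_neg, neg_div, add_neg_cancel]

lemma sin_div_abs_pow_add_eq_zero_of_add_eq_int_mul_two_pi {x y : ℝ} (k : ℕ) (n : ℤ)
    (h : x + y = n * (2 * π)) : sin x / |sin x| ^ k + sin y / |sin y| ^ k = 0 := by
  apply sin_div_abs_pow_add_eq_zero_of_sin_eq_neg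
  rw [eq_sub_of_add_eq' h, sin_int_mul_two_pi_sub]

/-- For every θ₃, the equilateral configuration θ₁ = θ₃ − 2π/3, θ₂ = θ₃ + 2π/3, θ₃
with ω = 0 satisfies the equations of motion; in particular every force sum vanishes.
Hence the equilateral shape is a fixed point and the individual angles are arbitrary. -/
theorem stmt_15 (θ₃ : ℝ) (θ₁ θ₂ ω : ℝ)
    (h1 : θ₁ = θ₃ - 2 * π / 3) (h2 : θ₂ = θ₃ + 2 * π / 3) (hω : ω = 0) :
    (sin (θ₁ - θ₂) / |sin (θ₁ - θ₂)| ^ 3 + sin (θ₁ - θ₃) / |sin (θ₁ - θ₃)| ^ 3 = 0) ∧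
    (sin (θ₂ - θ₁) / |sin (θ₂ - θ₁)| ^ 3 + sin (θ₂ - θ₃) / |sin (θ₂ - θ₃)| ^ 3 = 0) ∧
    (sin (θ₃ - θ₁) / |sin (θ₃ - θ₁)| ^ 3 + sin (θ₃ - θ₂) / |sin (θ₃ - θ₂)| ^ 3 = 0) ∧
    (ω ^ 2 / 2 * sin (2 * θ₁)
      = sin (θ₁ - θ₂) / |sin (θ₁ - θ₂)| ^ 3 + sin (θ₁ - θ₃) / |sin (θ₁ - θ₃)| ^ 3) ∧
    (ω ^ 2 / 2 * sin (2 * θ₂)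
      = sin (θ₂ - θ₁) / |sin (θ₂ - θ₁)| ^ 3 + sin (θ₂ - θ₃) / |sin (θ₂ - θ₃)| ^ 3) ∧
    (ω ^ 2 / 2 * sin (2 * θ₃)
      = sin (θ₃ - θ₁) / |sin (θ₃ - θ₁)| ^ 3 + sin (θ₃ - θ₂) / |sin (θ₃ - θ₂)| ^ 3) := by
  have force₁ := sin_div_abs_pow_add_eq_zero_of_add_eq_int_mul_two_pi 3 (-1)
    (x := θ₁ - θ₂) (y := θ₁ - θ₃) (by rw [h1, h2]; push_cast; ring)
  have force₂ := sin_div_abs_pow_add_eq_zero_of_add_eq_int_mul_two_pi 3 1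
    (x := θ₂ - θ₁) (y := θ₂ - θ₃) (by rw [h1, h2]; push_cast; ring)
  have force₃ := sin_div_abs_pow_add_eq_zero_of_add_eq_int_mul_two_pi 3 0
    (x := θ₃ - θ₁) (y := θ₃ - θ₂) (by rw [h1, h2]; push_cast; ring)
  subst hω
  simp only [zero_pow two_ne_zero, zero_div, zero_mul]
  exact ⟨force₁, force₂, force₃, force₁.symm, force₂.symm, force₃.symm⟩
end

section
/- Let θ ∈ (0, 2π/3) with θ ≠ π/2, let θ₃ ∈ ℝ, set θ₁ = θ₃ − θ, θ₂ = θ₃ + θ, and suppose ω ∈ ℝ is such that the equations of motion (ω²/2)·sin(2θ_k) = Σ_{i≠k} sin(θ_k−θ_i)/|sin(θ_k−θ_i)|³ hold for k = 1,2,3. Then sin(2θ₃) = 0 and cos(2θ₃) = +1 (i.e. θ₃ ≡ 0 mod π), and ω² = 2( 1/|sin 2θ|³ + 1/(sin²θ · sin 2θ) ). -/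
open Real

set_option maxHeartbeats 1000000 in
/-- Uniqueness for isosceles relative equilibria with θ ∈ (0,2π/3)\{π/2}: if the
configuration θ₁ = θ₃ − θ, θ₂ = θ₃ + θ, θ₃ with some ω satisfies the equations of
motion, then θ₃ ≡ 0 mod π (sin 2θ₃ = 0, cos 2θ₃ = 1) and
ω² = 2(1/|sin 2θ|³ + 1/(sin²θ·sin 2θ)). -/
theorem stmt_16 (θ : ℝ) (hθ : θ ∈ Set.Ioo 0 (2 * π / 3)) (hθ' : θ ≠ π / 2)
    (θ₃ : ℝ) (θ₁ θ₂ : ℝ) (h1 : θ₁ = θ₃ - θ) (h2 : θ₂ = θ₃ + θ) (ω : ℝ)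
    (eom1 : ω ^ 2 / 2 * sin (2 * θ₁)
      = sin (θ₁ - θ₂) / |sin (θ₁ - θ₂)| ^ 3 + sin (θ₁ - θ₃) / |sin (θ₁ - θ₃)| ^ 3)
    (eom2 : ω ^ 2 / 2 * sin (2 * θ₂)
      = sin (θ₂ - θ₁) / |sin (θ₂ - θ₁)| ^ 3 + sin (θ₂ - θ₃) / |sin (θ₂ - θ₃)| ^ 3)
    (eom3 : ω ^ 2 / 2 * sin (2 * θ₃)
      = sin (θ₃ - θ₁) / |sin (θ₃ - θ₁)| ^ 3 + sin (θ₃ - θ₂) / |sin (θ₃ - θ₂)| ^ 3) :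
    sin (2 * θ₃) = 0 ∧ cos (2 * θ₃) = 1 ∧
    ω ^ 2 = 2 * (1 / |sin (2 * θ)| ^ 3 + 1 / (sin θ ^ 2 * sin (2 * θ))) := by
  subst h1 h2
  obtain ⟨hθ0, hθ3⟩ := hθ
  have hπ : (0:ℝ) < π := Real.pi_pos
  have hu : 0 < sin θ := Real.sin_pos_of_pos_of_lt_pi hθ0 (by linarith)
  -- sin (2θ) ≠ 0
  have hs : sin (2*θ) ≠ 0 := by
    intro h
    rcases Real.sin_eq_zero_iff.mp h with ⟨n, hn⟩
    have hn1 : (0:ℝ) < (n:ℝ) := by nlinarith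
    have hn2 : ((n:ℝ)) < 2 := by nlinarith
    have hn1' : 0 < n := by exact_mod_cast hn1
    have hn2' : n < 2 := by exact_mod_cast hn2
    have : n = 1 := by omega
    subst this
    apply hθ'
    push_cast at hn
    linarith
  -- if sin(2θ) < 0 then sin(2θ)^2 < sin θ ^2
  have key : sin (2*θ) < 0 → sin (2*θ)^2 < sin θ ^ 2 := by
    intro hneg
    have hc : cos θ < 0 := by
      rw [Real.sin_two_mul] at hneg
      nlinarith
    have hc2 : cos (2*π/3) < cos θ :=
      Real.cos_lt_cos_of_nonneg_of_le_pi (le_of_lt hθ0) (by linarith) hθ3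
    have hc3 : cos (2*π/3) = -(1/2) := by
      rw [show (2*π/3) = π - π/3 by ring, Real.cos_pi_sub, Real.cos_pi_div_three]
    rw [hc3] at hc2
    rw [Real.sin_two_mul]
    have ht : 0 < (1/2 - cos θ) * (cos θ + 1/2) := by nlinarith
    nlinarith [mul_pos hu hu, mul_pos (mul_pos hu hu) ht]
  -- rewrite the eoms
  have r3 : θ₃ + θ - (θ₃ - θ) = 2*θ := by ring
  have r4 : θ₃ + θ - θ₃ = θ := by ring
  have r5 : θ₃ - (θ₃ - θ) = θ := by ring
  have r6 : θ₃ - (θ₃ + θ) = -θ := by ring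
  rw [r3, r4] at eom2
  rw [r5, r6, Real.sin_neg, abs_neg] at eom3
  clear eom1
  set s := sin (2*θ) with hsdef
  set u := sin θ with hudef
  have hau : |u| = u := abs_of_pos hu
  rw [hau] at eom2 eom3
  -- eom3 gives ω² sin 2θ₃ = 0
  have h30 : ω^2 * sin (2*θ₃) = 0 := by
    have h : ω^2/2 * sin (2*θ₃) = 0 := by rw [eom3]; ring
    linarith
  -- ω ≠ 0
  have hω : ω ≠ 0 := by
    intro h0
    subst h0
    simp only [ne_eq, OfNat.ofNat_ne_zero, not_false_eq_true, zero_pow, zero_div,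
      zero_mul] at eom2
    rcases lt_or_gt_of_ne hs with hneg | hpos
    · have hk := key hneg
      have has : |s| = -s := abs_of_neg hneg
      rw [has] at eom2
      have heq : s / (-s)^3 + u / u^3 = (s^2 - u^2) / (u^2 * s^2) := by
        rw [show (-s)^3 = -(s^3) by ring]
        field_simp [hs, ne_of_gt hu]
        ring
      rw [heq] at eom2
      have hnum : s^2 - u^2 < 0 := by nlinarith
      have hden : 0 < u^2 * s^2 := by positivity
      have : (s^2 - u^2) / (u^2 * s^2) < 0 := div_neg_of_neg_of_pos hnum hden
      linarith
    · have has : |s| = s := abs_of_pos hpos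
      rw [has] at eom2
      have : 0 < s / s^3 + u / u^3 :=
        add_pos (div_pos hpos (pow_pos hpos 3)) (div_pos hu (pow_pos hu 3))
      linarith
  have hω2 : 0 < ω^2 := by positivity
  have hsin3 : sin (2*θ₃) = 0 := by
    rcases mul_eq_zero.mp h30 with h | h
    · exact absurd h (by positivity)
    · exact h
  set c := cos (2*θ₃) with hcdef
  have hc2 : c^2 = 1 := by
    have h := Real.sin_sq_add_cos_sq (2*θ₃)
    rw [hsin3] at h
    nlinarith
  -- eom2 in terms of c
  have hsin22 : sin (2*(θ₃+θ)) = c * s := by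
    rw [show 2*(θ₃+θ) = 2*θ₃ + 2*θ by ring, Real.sin_add, hsin3]
    ring
  rw [hsin22] at eom2
  -- K := 1/|s|³ + 1/(u²s) is positive
  have hK : 0 < 1/|s|^3 + 1/(u^2*s) := by
    rcases lt_or_gt_of_ne hs with hneg | hpos
    · have hk := key hneg
      have has : |s| = -s := abs_of_neg hneg
      rw [has]
      have hs3 : 0 < (-s)^3 := pow_pos (by linarith) 3
      have heq : 1/(-s)^3 + 1/(u^2*s) = (u^2 - s^2) / (u^2 * (-s)^3) := by
        rw [show (-s)^3 = -(s^3) by ring]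
        field_simp [hs, ne_of_gt hu]
        ring
      rw [heq]
      exact div_pos (by nlinarith) (by positivity)
    · have has : |s| = s := abs_of_pos hpos
      rw [has]
      positivity
  -- ω² c = 2K
  have hKs : (1/|s|^3 + 1/(u^2*s)) * s = s/|s|^3 + u/u^3 := by
    have habs : |s| ≠ 0 := abs_ne_zero.mpr hs
    field_simp [hs, ne_of_gt hu, habs]
  have h' : ω^2 * c * s = (2 * (1/|s|^3 + 1/(u^2*s))) * s := by
    linear_combination 2*eom2 - 2*hKs
  have hce : ω^2 * c = 2 * (1/|s|^3 + 1/(u^2*s)) := mul_right_cancel₀ hs h'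
  have hc1 : c = 1 := by
    have hfac : (c - 1) * (c + 1) = 0 := by nlinarith
    rcases mul_eq_zero.mp hfac with h | h
    · linarith
    · exfalso
      have hcneg : c = -1 := by linarith
      rw [hcneg] at hce
      nlinarith
  refine ⟨hsin3, hc1, ?_⟩
  rw [hc1] at hce
  linarith
end

section
/- Let θ ∈ (2π/3, π), let θ₃ ∈ ℝ, set θ₁ = θ₃ − θ, θ₂ = θ₃ + θ, and suppose ω ∈ ℝ is such that the equations of motion (ω²/2)·sin(2θ_k) = Σ_{i≠k} sin(θ_k−θ_i)/|sin(θ_k−θ_i)|³ hold for k = 1,2,3. Then sin(2θ₃) = 0 and cos(2θ₃) = −1 (i.e. θ₃ ≡ π/2 mod π), and ω² = −2( 1/|sin 2θ|³ + 1/(sin²θ · sin 2θ) ). -/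
set_option maxHeartbeats 1000000

open Real

/-- Uniqueness for isosceles relative equilibria with θ ∈ (2π/3,π): if the
configuration θ₁ = θ₃ − θ, θ₂ = θ₃ + θ, θ₃ with some ω satisfies the equations of
motion, then θ₃ ≡ π/2 mod π (sin 2θ₃ = 0, cos 2θ₃ = −1) and
ω² = −2(1/|sin 2θ|³ + 1/(sin²θ·sin 2θ)). -/
theorem stmt_17 (θ : ℝ) (hθ : θ ∈ Set.Ioo (2 * π / 3) π)
    (θ₃ : ℝ) (θ₁ θ₂ : ℝ) (h1 : θ₁ = θ₃ - θ) (h2 : θ₂ = θ₃ + θ) (ω : ℝ)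
    (eom1 : ω ^ 2 / 2 * sin (2 * θ₁)
      = sin (θ₁ - θ₂) / |sin (θ₁ - θ₂)| ^ 3 + sin (θ₁ - θ₃) / |sin (θ₁ - θ₃)| ^ 3)
    (eom2 : ω ^ 2 / 2 * sin (2 * θ₂)
      = sin (θ₂ - θ₁) / |sin (θ₂ - θ₁)| ^ 3 + sin (θ₂ - θ₃) / |sin (θ₂ - θ₃)| ^ 3)
    (eom3 : ω ^ 2 / 2 * sin (2 * θ₃)
      = sin (θ₃ - θ₁) / |sin (θ₃ - θ₁)| ^ 3 + sin (θ₃ - θ₂) / |sin (θ₃ - θ₂)| ^ 3) :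
    sin (2 * θ₃) = 0 ∧ cos (2 * θ₃) = -1 ∧
    ω ^ 2 = -(2 * (1 / |sin (2 * θ)| ^ 3 + 1 / (sin θ ^ 2 * sin (2 * θ)))) := by
  obtain ⟨hθa, hθb⟩ := hθ
  have hπ := Real.pi_pos
  have hs : 0 < sin θ := Real.sin_pos_of_pos_of_lt_pi (by linarith) hθb
  have hs2 : sin (2 * θ) < 0 := by
    have h := Real.sin_pos_of_pos_of_lt_pi (x := 2 * θ - π) (by linarith) (by linarith)
    rw [Real.sin_sub_pi] at h; linarith
  have hne : sin (2 * θ) ≠ 0 := ne_of_lt hs2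
  have hne' : sin θ ≠ 0 := ne_of_gt hs
  have hc : cos θ < -(1/2) := by
    have h23 : cos (2 * π / 3) = -(1/2) := by
      have : (2 : ℝ) * π / 3 = π - π / 3 := by ring
      rw [this, Real.cos_pi_sub, Real.cos_pi_div_three]
    calc cos θ < cos (2 * π / 3) :=
          Real.cos_lt_cos_of_nonneg_of_le_pi (by positivity) (le_of_lt hθb) hθa
      _ = -(1/2) := h23
  -- simplify the equations of motion
  rw [h1, h2] at eom1 eom2 eom3
  rw [show θ₃ - θ - (θ₃ + θ) = -(2*θ) from by ring,
      show θ₃ - θ - θ₃ = -θ from by ring,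
      show 2 * (θ₃ - θ) = 2*θ₃ - 2*θ from by ring] at eom1
  rw [show θ₃ + θ - (θ₃ - θ) = 2*θ from by ring,
      show θ₃ + θ - θ₃ = θ from by ring,
      show 2 * (θ₃ + θ) = 2*θ₃ + 2*θ from by ring] at eom2
  rw [show θ₃ - (θ₃ - θ) = θ from by ring,
      show θ₃ - (θ₃ + θ) = -θ from by ring] at eom3
  simp only [Real.sin_neg, abs_neg, neg_div] at eom1 eom3
  rw [Real.sin_sub] at eom1
  rw [Real.sin_add] at eom2
  have key3 : ω ^ 2 * sin (2 * θ₃) = 0 := by linarith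
  have hA : sin (2*θ) / |sin (2*θ)| ^ 3 + sin θ / |sin θ| ^ 3
      = 1 / sin θ ^ 2 - 1 / sin (2*θ) ^ 2 := by
    rw [abs_of_neg hs2, abs_of_pos hs]
    rw [show (-sin (2*θ)) ^ 3 = -(sin (2*θ)) ^ 3 from by ring, div_neg]
    field_simp
    ring
  have hApos : 0 < 1 / sin θ ^ 2 - 1 / sin (2*θ) ^ 2 := by
    have h4 : 1 < 4 * cos θ ^ 2 := by nlinarith
    have h2s : sin θ ^ 2 < sin (2*θ) ^ 2 := by
      rw [Real.sin_two_mul]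
      nlinarith [mul_pos hs hs]
    rw [sub_pos]
    exact one_div_lt_one_div_of_lt (by positivity) h2s
  have key : ω ^ 2 * cos (2*θ₃) * sin (2*θ)
      = 2 * (1 / sin θ ^ 2 - 1 / sin (2*θ) ^ 2) := by
    rw [← hA]; linear_combination eom2 - eom1
  have hω2 : 0 < ω ^ 2 := by
    rcases (sq_nonneg ω).lt_or_eq with h | h
    · exact h
    · rw [← h, zero_mul, zero_mul] at key; linarith
  have hsin3 : sin (2 * θ₃) = 0 := by
    rcases mul_eq_zero.mp key3 with h | h
    · exact absurd h (ne_of_gt hω2)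
    · exact h
  have hcossq : cos (2*θ₃) ^ 2 = 1 := by
    have := Real.sin_sq_add_cos_sq (2*θ₃)
    rw [hsin3] at this; nlinarith
  have hcosneg : cos (2*θ₃) < 0 := by
    by_contra h
    push_neg at h
    have h1 : ω ^ 2 * cos (2*θ₃) * sin (2*θ) ≤ 0 :=
      mul_nonpos_iff.mpr (Or.inl ⟨mul_nonneg hω2.le h, hs2.le⟩)
    linarith
  have hcos3 : cos (2 * θ₃) = -1 := by nlinarith [hcossq, hcosneg]
  refine ⟨hsin3, hcos3, ?_⟩
  rw [hcos3] at key
  rw [abs_of_neg hs2,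
      show (-sin (2*θ)) ^ 3 = -(sin (2*θ)) ^ 3 from by ring, div_neg]
  field_simp at key
  field_simp
  linear_combination (-1 : ℝ) * key
end

section
/- For θ ∈ (0, 2π/3) with θ ≠ π/2, the quantity 1/|sin 2θ|³ + 1/(sin²θ · sin 2θ) is strictly positive, and for θ ∈ (2π/3, π) it is strictly negative. -/
/-! For `θ < π/2` both terms are positive. For `π/2 < θ < π` we have `sin 2θ < 0`, and using
`sin 2θ = 2 sin θ cos θ` the quantity collapses to `(1 - 4 cos² θ) / |sin 2θ|³`, whose sign
changes exactly where `cos θ = -1/2`, i.e. at `θ = 2π/3`. -/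

open Real

namespace Real

theorem cos_two_pi_div_three : cos (2 * π / 3) = -(1 / 2) := by
  rw [show 2 * π / 3 = π - π / 3 by ring, cos_pi_sub, cos_pi_div_three]

variable {θ : ℝ}

theorem sin_two_mul_neg_of_pi_div_two_lt_of_lt_pi (h₁ : π / 2 < θ) (h₂ : θ < π) :
    sin (2 * θ) < 0 := by
  rw [sin_two_mul]
  exact mul_neg_of_pos_of_neg (mul_pos two_pos (sin_pos_of_pos_of_lt_pi (by linarith [pi_pos]) h₂))
    (cos_neg_of_pi_div_two_lt_of_lt h₁ (by linarith))

theorem one_div_abs_sin_two_mul_pow_three_add_eq (hs : sin θ ≠ 0) (hS : sin (2 * θ) < 0) :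
    1 / |sin (2 * θ)| ^ 3 + 1 / (sin θ ^ 2 * sin (2 * θ)) =
      (1 - 4 * cos θ ^ 2) / |sin (2 * θ)| ^ 3 := by
  have hc : cos θ ≠ 0 := by
    rintro hc
    simp [sin_two_mul, hc] at hS
  rw [abs_of_neg hS, sin_two_mul]
  field_simp
  ring

end Real

/-- The quantity 1/|sin 2θ|³ + 1/(sin²θ·sin 2θ) is strictly positive for
θ ∈ (0,2π/3)\{π/2} and strictly negative for θ ∈ (2π/3,π). -/
theorem stmt_18 :
    (∀ θ : ℝ, θ ∈ Set.Ioo 0 (2 * π / 3) → θ ≠ π / 2 →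
      0 < 1 / |sin (2 * θ)| ^ 3 + 1 / (sin θ ^ 2 * sin (2 * θ))) ∧
    (∀ θ : ℝ, θ ∈ Set.Ioo (2 * π / 3) π →
      1 / |sin (2 * θ)| ^ 3 + 1 / (sin θ ^ 2 * sin (2 * θ)) < 0) := by
  have hπ := pi_pos
  refine ⟨fun θ ⟨h₀, h₁⟩ hne ↦ ?_, fun θ ⟨h₁, h₂⟩ ↦ ?_⟩
  · have hs : 0 < sin θ := sin_pos_of_pos_of_lt_pi h₀ (by linarith)
    rcases hne.lt_or_gt with hlt | hgt
    · have hS : 0 < sin (2 * θ) := sin_pos_of_pos_of_lt_pi (by linarith) (by linarith)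
      positivity
    · have hS := sin_two_mul_neg_of_pi_div_two_lt_of_lt_pi hgt (by linarith)
      have hc₀ : cos θ < 0 := cos_neg_of_pi_div_two_lt_of_lt hgt (by linarith)
      have hc : -(1 / 2) < cos θ := by
        rw [← cos_two_pi_div_three]
        exact cos_lt_cos_of_nonneg_of_le_pi h₀.le (by linarith) h₁
      rw [one_div_abs_sin_two_mul_pow_three_add_eq hs.ne' hS]
      exact div_pos (by nlinarith) (pow_pos (abs_pos.mpr hS.ne) 3)
  · have hs : 0 < sin θ := sin_pos_of_pos_of_lt_pi (by linarith) h₂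
    have hS := sin_two_mul_neg_of_pi_div_two_lt_of_lt_pi (by linarith) h₂
    have hc : cos θ < -(1 / 2) := by
      rw [← cos_two_pi_div_three]
      exact cos_lt_cos_of_nonneg_of_le_pi (by linarith) h₂.le h₁
    rw [one_div_abs_sin_two_mul_pow_three_add_eq hs.ne' hS]
    exact div_neg_of_neg_of_pos (by nlinarith) (pow_pos (abs_pos.mpr hS.ne) 3)
end

section
/- There exist θ₁, θ₂, θ₃ ∈ ℝ and ω ∈ ℝ with ω ≠ 0 satisfying the equations of motion (ω²/2)·sin(2θ_k) = Σ_{i≠k} sin(θ_k−θ_i)/|sin(θ_k−θ_i)|³ for k = 1,2,3, such that cos(θ₂−θ₁) = −1/8, ω² = (32/63)·√(5326√17 + 153714/7), and the configuration is scalene, i.e. the three values cos(θ₂−θ₁), cos(θ₃−θ₁), cos(θ₃−θ₂) are pairwise distinct. -/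
open Real

set_option maxHeartbeats 4000000 in
/-- Existence of an explicit scalene relative equilibrium for equal masses with
cos(θ₂−θ₁) = −1/8 and ω² = (32/63)·√(5326√17 + 153714/7). -/
theorem stmt_19 :
    ∃ θ₁ θ₂ θ₃ ω : ℝ, ω ≠ 0 ∧
    (ω ^ 2 / 2 * sin (2 * θ₁)
      = sin (θ₁ - θ₂) / |sin (θ₁ - θ₂)| ^ 3 + sin (θ₁ - θ₃) / |sin (θ₁ - θ₃)| ^ 3) ∧
    (ω ^ 2 / 2 * sin (2 * θ₂)
      = sin (θ₂ - θ₁) / |sin (θ₂ - θ₁)| ^ 3 + sin (θ₂ - θ₃) / |sin (θ₂ - θ₃)| ^ 3) ∧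
    (ω ^ 2 / 2 * sin (2 * θ₃)
      = sin (θ₃ - θ₁) / |sin (θ₃ - θ₁)| ^ 3 + sin (θ₃ - θ₂) / |sin (θ₃ - θ₂)| ^ 3) ∧
    cos (θ₂ - θ₁) = -(1 / 8) ∧
    ω ^ 2 = 32 / 63 * Real.sqrt (5326 * Real.sqrt 17 + 153714 / 7) ∧
    cos (θ₂ - θ₁) ≠ cos (θ₃ - θ₁) ∧
    cos (θ₂ - θ₁) ≠ cos (θ₃ - θ₂) ∧
    cos (θ₃ - θ₁) ≠ cos (θ₃ - θ₂) := by
  set r := Real.sqrt 17 with hr_def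
  set q := Real.sqrt 7 with hq_def
  have hr2 : r ^ 2 = 17 := by rw [hr_def]; exact Real.sq_sqrt (by norm_num)
  have hq2 : q ^ 2 = 7 := by rw [hq_def]; exact Real.sq_sqrt (by norm_num)
  have hq0 : 0 < q := by rw [hq_def]; exact Real.sqrt_pos.mpr (by norm_num)
  have hr4 : (4 : ℝ) ≤ r := by
    rw [hr_def, show (4:ℝ) = Real.sqrt 16 by
      rw [show (16:ℝ) = 4 ^ 2 by norm_num]; exact (Real.sqrt_sq (by norm_num)).symm]
    exact Real.sqrt_le_sqrt (by norm_num)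
  have hr42 : r < 21 / 5 := by
    rw [hr_def]
    calc Real.sqrt 17 < Real.sqrt ((21/5) ^ 2) :=
          Real.sqrt_lt_sqrt (by norm_num) (by norm_num)
      _ = 21 / 5 := Real.sqrt_sq (by norm_num)
  set sv := Real.sqrt ((441 * r - 1665) / 512) with hsv_def
  set cv := Real.sqrt ((2177 - 441 * r) / 512) with hcv_def
  have h441 : (0:ℝ) < (441 * r - 1665) / 512 := by linarith
  have h2177 : (0:ℝ) < (2177 - 441 * r) / 512 := by linarith
  have hsv0 : 0 < sv := by rw [hsv_def]; exact Real.sqrt_pos.mpr h441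
  have hcv0 : 0 < cv := by rw [hcv_def]; exact Real.sqrt_pos.mpr h2177
  have hsv2 : sv ^ 2 = (441 * r - 1665) / 512 := by rw [hsv_def]; exact Real.sq_sqrt h441.le
  have hcv2 : cv ^ 2 = (2177 - 441 * r) / 512 := by rw [hcv_def]; exact Real.sq_sqrt h2177.le
  set W := 32 / 63 * Real.sqrt (5326 * r + 153714 / 7) with hW_def
  have hargpos : (0:ℝ) < 5326 * r + 153714 / 7 := by linarith
  have hW0 : 0 < W := by
    rw [hW_def]
    have := Real.sqrt_pos.mpr hargpos
    linarith
  have hWne : W ≠ 0 := ne_of_gt hW0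
  have hW2 : W ^ 2 = (32 / 63) ^ 2 * (5326 * r + 153714 / 7) := by
    rw [hW_def, mul_pow, Real.sq_sqrt hargpos.le]
  set om := Real.sqrt W with hom_def
  have hom2 : om ^ 2 = W := by rw [hom_def]; exact Real.sq_sqrt hW0.le
  have hom0 : om ≠ 0 := ne_of_gt (by rw [hom_def]; exact Real.sqrt_pos.mpr hW0)
  set a := Real.arcsin (3 / 4) with ha_def
  have hsina : Real.sin a = 3 / 4 := by
    rw [ha_def]; exact Real.sin_arcsin (by norm_num) (by norm_num)
  have hcosa : Real.cos a = q / 4 := by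
    rw [ha_def, Real.cos_arcsin,
      show (1:ℝ) - (3/4) ^ 2 = (q / 4) ^ 2 by linear_combination (-(1/16)) * hq2]
    exact Real.sqrt_sq (by linarith)
  have hsv1 : sv ≤ 1 := by
    rw [hsv_def, show ((441 * r - 1665) / 512 : ℝ) = ((441 * r - 1665) / 512 : ℝ) from rfl]
    have h1 : ((441 * r - 1665) / 512 : ℝ) ≤ 1 := by linarith
    calc Real.sqrt ((441 * r - 1665) / 512) ≤ Real.sqrt 1 := Real.sqrt_le_sqrt h1
      _ = 1 := Real.sqrt_one
  set v := Real.arcsin sv with hv_def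
  have hsinv : Real.sin v = sv := by
    rw [hv_def]; exact Real.sin_arcsin (by linarith) hsv1
  have hcosv : Real.cos v = cv := by
    rw [hv_def, Real.cos_arcsin,
      show (1:ℝ) - sv ^ 2 = cv ^ 2 by linear_combination - hsv2 - hcv2]
    exact Real.sqrt_sq hcv0.le
  set S0 := -(64 * q * sv * cv * (897 + 217 * r)) / 1323 with hS0_def
  set C0 := 4 * q * (1215 + 231 * r) / 1323 with hC0_def
  have hI : S0 ^ 2 + C0 ^ 2 = W ^ 2 := by
    rw [hS0_def, hC0_def]
    linear_combination ((-14801/9) + (148304/27)*cv^2 + (1936/3969)*q^2 + (3936256/35721)*q^2*sv^2*cv^2) * hr2 + ((4237088/194481) + (6574579712/1750329)*sv^2*cv^2 + (1760/343)*r + (75931648/83349)*r*sv^2*cv^2) * hq2 + ((6574579712/250047)*cv^2 + (75931648/11907)*r*cv^2) * hsv2 + ((218701312/27783) + (7578112/3969)*r) * hcv2 + (-1) * hW2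
  have h897 : (0:ℝ) < 897 + 217 * r := by linarith
  have hqsc : 0 < q * sv * cv * (897 + 217 * r) :=
    mul_pos (mul_pos (mul_pos hq0 hsv0) hcv0) h897
  have hS0neg : S0 < 0 := by
    rw [hS0_def]
    have h64 : 0 < 64 * (q * sv * cv * (897 + 217 * r)) := by linarith
    have : -(64 * q * sv * cv * (897 + 217 * r)) < 0 := by linarith [h64]
    linarith [div_neg_of_neg_of_pos this (show (0:ℝ) < 1323 by norm_num)]
  have hCW1 : (C0 / W) ^ 2 + (S0 / W) ^ 2 = 1 := by
    have h : (C0 / W) ^ 2 + (S0 / W) ^ 2 = (S0 ^ 2 + C0 ^ 2) / W ^ 2 := by ring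
    rw [h, hI, div_self (pow_ne_zero 2 hWne)]
  have hsqC : (C0 / W) ^ 2 ≤ 1 := by linarith [sq_nonneg (S0 / W), hCW1]
  have habsC := abs_le.mp (((sq_le_one_iff_abs_le_one _).mp hsqC))
  have hCle : C0 / W ≤ 1 := habsC.2
  have hCge : -1 ≤ C0 / W := habsC.1
  set M := -Real.arccos (C0 / W) with hM_def
  have hSWnn : (0:ℝ) ≤ -(S0 / W) := by
    rw [← neg_div]
    exact div_nonneg (by linarith) hW0.le
  have hsinM : Real.sin M = S0 / W := by
    rw [hM_def, Real.sin_neg, Real.sin_arccos,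
      show 1 - (C0 / W) ^ 2 = (-(S0 / W)) ^ 2 by linear_combination - hCW1,
      Real.sqrt_sq hSWnn]
    ring
  have hcosM : Real.cos M = C0 / W := by
    rw [hM_def, Real.cos_neg]
    exact Real.cos_arccos hCge hCle
  -- sign facts for the pairwise sines
  have hpos2a : (0:ℝ) < 2 * (3 / 4) * (q / 4) := by linarith
  have hpospv : (0:ℝ) < 3 / 4 * cv + q / 4 * sv := by
    linarith [mul_pos hq0 hsv0, hcv0]
  have hlt2 : (3 / 4 * cv) ^ 2 - (q / 4 * sv) ^ 2 = (31248 - 7056 * r) / 8192 := by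
    linear_combination ((-1/16)*sv^2) * hq2 + (-7/16) * hsv2 + (9/16) * hcv2
  have hqsv3cv : q / 4 * sv < 3 / 4 * cv :=
    lt_of_pow_lt_pow_left₀ 2 (by linarith [hcv0]) (by linarith [hlt2, hr42])
  have hposmv : (0:ℝ) < 3 / 4 * cv - q / 4 * sv := sub_pos.mpr hqsv3cv
  have hlt1 : (q / 4 * cv) ^ 2 - (3 / 4 * sv) ^ 2 = (30224 - 7056 * r) / 8192 := by
    linear_combination ((1/16)*cv^2) * hq2 + (-9/16) * hsv2 + (7/16) * hcv2
  have h3qcv : 3 / 4 * sv < q / 4 * cv :=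
    lt_of_pow_lt_pow_left₀ 2 (by linarith [mul_pos hq0 hcv0]) (by linarith [hlt1, hr42])
  -- division helpers
  have posdiv : ∀ x : ℝ, 0 < x → x / |x| ^ 3 = 1 / x ^ 2 := by
    intro x hx
    rw [abs_of_pos hx, div_eq_div_iff (pow_ne_zero 3 hx.ne') (pow_ne_zero 2 hx.ne')]
    ring
  have negdiv : ∀ x : ℝ, 0 < x → -x / |(-x)| ^ 3 = -(1 / x ^ 2) := by
    intro x hx
    rw [abs_neg, neg_div, posdiv x hx]
  have hcol1 : ∀ x y : ℝ, W / 2 * (S0 / W * x - C0 / W * y) = (S0 * x - C0 * y) / 2 := by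
    intro x y
    field_simp
  have hcol2 : ∀ x y : ℝ, W / 2 * (S0 / W * x + C0 / W * y) = (S0 * x + C0 * y) / 2 := by
    intro x y
    field_simp
  have hfrac0 : 1 / (2 * (3 / 4) * (q / 4)) ^ 2 = 64 / 63 := by
    rw [div_eq_iff (ne_of_gt (pow_pos hpos2a 2))]
    linear_combination (-(1/7)) * hq2
  have hfracP : 1 / (3 / 4 * cv + q / 4 * sv) ^ 2
      = 32 * (897 + 217 * r) / 3969 * (3 / 4 * cv - q / 4 * sv) ^ 2 := by
    rw [div_eq_iff (ne_of_gt (pow_pos hpospv 2))]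
    linear_combination ((49/4096) + (4991/4096)*cv^2 + (-10633/36864)*sv^2) * hr2 + ((299/588)*sv^2*cv^2 + (-299/1512)*sv^4 + (-299/10584)*q^2*sv^4 + (31/252)*r*sv^2*cv^2 + (-31/648)*r*sv^4 + (-31/4536)*r*q^2*sv^4) * hq2 + ((-463/1152) + (299/84)*cv^2 + (-299/216)*sv^2 + (-119/1152)*r + (31/36)*r*cv^2 + (-217/648)*r*sv^2) * hsv2 + ((-529/896) + (-897/392)*cv^2 + (-15/128)*r + (-31/56)*r*cv^2) * hcv2
  have hfracM : 1 / (3 / 4 * cv - q / 4 * sv) ^ 2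
      = 32 * (897 + 217 * r) / 3969 * (3 / 4 * cv + q / 4 * sv) ^ 2 := by
    rw [div_eq_iff (ne_of_gt (pow_pos hposmv 2))]
    linear_combination ((49/4096) + (4991/4096)*cv^2 + (-10633/36864)*sv^2) * hr2 + ((299/588)*sv^2*cv^2 + (-299/1512)*sv^4 + (-299/10584)*q^2*sv^4 + (31/252)*r*sv^2*cv^2 + (-31/648)*r*sv^4 + (-31/4536)*r*q^2*sv^4) * hq2 + ((-463/1152) + (299/84)*cv^2 + (-299/216)*sv^2 + (-119/1152)*r + (31/36)*r*cv^2 + (-217/648)*r*sv^2) * hsv2 + ((-529/896) + (-897/392)*cv^2 + (-15/128)*r + (-31/56)*r*cv^2) * hcv2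
  -- cosine values of the differences
  have hc2a : Real.cos (M / 2 + a - (M / 2 - a)) = -(1 / 8) := by
    rw [show M / 2 + a - (M / 2 - a) = 2 * a by ring, Real.cos_two_mul, hcosa]
    linear_combination (1/8) * hq2
  have hc31 : Real.cos (M / 2 + v - (M / 2 - a)) = q / 4 * cv - 3 / 4 * sv := by
    rw [show M / 2 + v - (M / 2 - a) = a + v by ring, Real.cos_add, hsina, hcosa, hsinv, hcosv]
  have hc32 : Real.cos (M / 2 + v - (M / 2 + a)) = q / 4 * cv + 3 / 4 * sv := by
    rw [show M / 2 + v - (M / 2 + a) = -(a - v) by ring, Real.cos_neg, Real.cos_sub,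
      hsina, hcosa, hsinv, hcosv]
  refine ⟨M / 2 - a, M / 2 + a, M / 2 + v, om, hom0, ?_, ?_, ?_, ?_, ?_, ?_, ?_, ?_⟩
  · -- equation for θ₁
    rw [show 2 * (M / 2 - a) = M - 2 * a by ring,
      show M / 2 - a - (M / 2 + a) = -(2 * a) by ring,
      show M / 2 - a - (M / 2 + v) = -(a + v) by ring,
      Real.sin_sub, hsinM, hcosM, Real.sin_neg, Real.sin_neg, Real.sin_add,
      Real.sin_two_mul, Real.cos_two_mul, hsina, hcosa, hsinv, hcosv, hom2,
      negdiv _ hpos2a, negdiv _ hpospv, hcol1, hfrac0, hfracP, hS0_def, hC0_def]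
    linear_combination (-217/1152) * hr2 + ((-135/196) + (598/1323)*sv^2 + (-1196/441)*q*sv*cv + (-11/84)*r + (62/567)*r*sv^2 + (-124/189)*r*q*sv*cv) * hq2 + ((598/189) + (62/81)*r) * hsv2 + ((598/147) + (62/63)*r) * hcv2
  · -- equation for θ₂
    rw [show 2 * (M / 2 + a) = M + 2 * a by ring,
      show M / 2 + a - (M / 2 - a) = 2 * a by ring,
      show M / 2 + a - (M / 2 + v) = a - v by ring,
      Real.sin_add, hsinM, hcosM, Real.sin_sub, Real.sin_two_mul,
      Real.cos_two_mul, hsina, hcosa, hsinv, hcosv, hom2,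
      posdiv _ hpos2a, posdiv _ hposmv, hcol2, hfrac0, hfracM, hS0_def, hC0_def]
    linear_combination (217/1152) * hr2 + ((135/196) + (-598/1323)*sv^2 + (-1196/441)*q*sv*cv + (11/84)*r + (-62/567)*r*sv^2 + (-124/189)*r*q*sv*cv) * hq2 + ((-598/189) + (-62/81)*r) * hsv2 + ((-598/147) + (-62/63)*r) * hcv2
  · -- equation for θ₃
    rw [show 2 * (M / 2 + v) = M + 2 * v by ring,
      show M / 2 + v - (M / 2 - a) = a + v by ring,
      show M / 2 + v - (M / 2 + a) = -(a - v) by ring,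
      Real.sin_add, hsinM, hcosM, Real.sin_neg, Real.sin_add, Real.sin_sub,
      Real.sin_two_mul, Real.cos_two_mul, hsina, hcosa, hsinv, hcosv, hom2,
      posdiv _ hpospv, negdiv _ hposmv, hcol2, hfracP, hfracM, hS0_def, hC0_def]
    linear_combination ((217/24)*q*sv*cv) * hr2 + ((-19136/441)*q*sv*cv + (-1984/189)*r*q*sv*cv) * hcv2
  · exact hc2a
  · rw [hom2, hW_def, hr_def]
  · rw [hc2a, hc31]
    exact ne_of_lt (by linarith [h3qcv])
  · rw [hc2a, hc32]
    exact ne_of_lt (by linarith [mul_pos hq0 hcv0, hsv0])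
  · rw [hc31, hc32]
    exact ne_of_lt (by linarith [hsv0])
end
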